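/- Let C > 0 be a constant such that for every m ∈ ℕ, every D ∈ ℕ, every g ∈ [1/3, 1]^m with ‖g‖₁ ≤ m − D, and independent samples x¹, x² from g one has Pr[|‖x¹‖₁ − ‖x²‖₁| ≥ (1/5)√D] ≥ C. Then there exist constants K > 0 and c > 0 such that the following holds for all n ≥ 2 and all μ ≥ log₂(n) satisfying the well-behaved frequency assumption. Consider a run of the cGA on OneMax, let D_t = n − ‖f_t‖₁ for all t, and let T be the first time t at which D_t ≤ K or f_{i,t} < 1/3 for some i ∈ [1..n]. Then Pr[ T ≥ (10(2+√2)/C)·μ·√n ] ≤ c·exp(−μ/c). -/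
import Mathlib


open Finset

noncomputable def sampleProb {n : ℕ} (f : Fin n → ℝ) (x : Fin n → Bool) : ℝ :=
  ∏ i, if x i then f i else 1 - f i

noncomputable def prSample {n : ℕ} (f : Fin n → ℝ) (E : Set (Fin n → Bool)) : ℝ :=
  ∑ x : Fin n → Bool, Set.indicator E (sampleProb f) x

noncomputable def prPair {n : ℕ} (f : Fin n → ℝ)
    (E : Set ((Fin n → Bool) × (Fin n → Bool))) : ℝ :=
  ∑ p : (Fin n → Bool) × (Fin n → Bool),
    Set.indicator E (fun p => sampleProb f p.1 * sampleProb f p.2) p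

def numOnes {n : ℕ} (x : Fin n → Bool) : ℕ :=
  (Finset.univ.filter (fun i => x i = true)).card

def boolToR (b : Bool) : ℝ := if b then 1 else 0

noncomputable def ySel {n : ℕ} (F : (Fin n → Bool) → ℝ) (x1 x2 : Fin n → Bool) :
    (Fin n → Bool) × (Fin n → Bool) :=
  if F x2 ≤ F x1 then (x1, x2) else (x2, x1)

noncomputable def cgaPrelim {n : ℕ} (F : (Fin n → Bool) → ℝ) (μ : ℝ)
    (f : Fin n → ℝ) (x1 x2 : Fin n → Bool) : Fin n → ℝ :=
  fun i => f i + (1 / μ) * (boolToR ((ySel F x1 x2).1 i) - boolToR ((ySel F x1 x2).2 i))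

noncomputable def cgaStep {n : ℕ} (F : (Fin n → Bool) → ℝ) (μ : ℝ)
    (f : Fin n → ℝ) (x1 x2 : Fin n → Bool) : Fin n → ℝ :=
  fun i => max (1 / (n : ℝ)) (min (cgaPrelim F μ f x1 x2 i) (1 - 1 / (n : ℝ)))

def wellBehaved (n : ℕ) (μ : ℝ) : Prop :=
  ∃ m : ℕ, (1 - 2 / (n : ℝ)) * μ = 2 * (m : ℝ)

noncomputable def jump (n k : ℕ) (x : Fin n → Bool) : ℝ :=
  if numOnes x + k ≤ n ∨ numOnes x = n then ((numOnes x + k : ℕ) : ℝ)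
  else (n : ℝ) - (numOnes x : ℝ)

noncomputable def prHit {n : ℕ} (F : (Fin n → Bool) → ℝ) (μ : ℝ) :
    ℕ → (Fin n → ℝ) → ℝ
  | 0, _ => 0
  | (T + 1), f =>
      ∑ x1 : Fin n → Bool, ∑ x2 : Fin n → Bool,
        sampleProb f x1 * sampleProb f x2 *
          (if (∀ i, x1 i = true) ∨ (∀ i, x2 i = true) then 1
           else prHit F μ T (cgaStep F μ f x1 x2))

noncomputable def oneMax {n : ℕ} (x : Fin n → Bool) : ℝ := (numOnes x : ℝ)

/-- `prNoStop F μ K N f` is the probability that, running the cGA for `N` iterations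
from frequency vector `f`, the stopping condition
"`D_t ≤ K` or some frequency is below `1/3`" never holds at times `0, …, N-1`;
i.e. the probability that the stopping time `T` satisfies `T ≥ N`. -/
noncomputable def prNoStop {n : ℕ} (F : (Fin n → Bool) → ℝ) (μ : ℝ) (K : ℝ) :
    ℕ → (Fin n → ℝ) → ℝ
  | 0, _ => 1
  | (N + 1), f =>
      if ((n : ℝ) - ∑ i, f i ≤ K ∨ ∃ i, f i < 1 / 3) then 0
      else
        ∑ x1 : Fin n → Bool, ∑ x2 : Fin n → Bool,
          sampleProb f x1 * sampleProb f x2 *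
            prNoStop F μ K N (cgaStep F μ f x1 x2)

section CgaAux

open scoped Classical

private lemma sqrt_add_le' {x b : ℝ} (hx : 0 < x) (hb : 0 ≤ b) :
    Real.sqrt (x + b) ≤ Real.sqrt x + b / (2 * Real.sqrt x) := by
  have hs : 0 < Real.sqrt x := Real.sqrt_pos.2 hx
  have h1 : Real.sqrt (x + b) ^ 2 = x + b := Real.sq_sqrt (by linarith)
  have h2 : Real.sqrt x ^ 2 = x := Real.sq_sqrt hx.le
  have h3 : 0 ≤ Real.sqrt (x + b) := Real.sqrt_nonneg _
  have key : Real.sqrt (x + b) - Real.sqrt x ≤ b / (2 * Real.sqrt x) := by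
    rw [le_div_iff₀ (by positivity)]
    nlinarith [sq_nonneg (Real.sqrt (x + b) - Real.sqrt x)]
  linarith

private lemma sqrt_sub_le' {x g : ℝ} (hx : 0 < x) (hg : 0 ≤ g) (hgx : g ≤ x) :
    Real.sqrt (x - g) ≤ Real.sqrt x - g / (2 * Real.sqrt x) := by
  have hs : 0 < Real.sqrt x := Real.sqrt_pos.2 hx
  have h1 : Real.sqrt (x - g) ^ 2 = x - g := Real.sq_sqrt (by linarith)
  have h2 : Real.sqrt x ^ 2 = x := Real.sq_sqrt hx.le
  have h3 : 0 ≤ Real.sqrt (x - g) := Real.sqrt_nonneg _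
  have key : g / (2 * Real.sqrt x) ≤ Real.sqrt x - Real.sqrt (x - g) := by
    rw [div_le_iff₀ (by positivity)]
    nlinarith [sq_nonneg (Real.sqrt x - Real.sqrt (x - g))]
  linarith

private lemma sum_sampleProb_mul {n : ℕ} (f : Fin n → ℝ) (g : Fin n → Bool → ℝ) :
    ∑ x : Fin n → Bool, sampleProb f x * ∏ i, g i (x i)
      = ∏ i, (f i * g i true + (1 - f i) * g i false) := by
  have h : ∀ x : Fin n → Bool, sampleProb f x * ∏ i, g i (x i)
      = ∏ i, ((if x i then f i else 1 - f i) * g i (x i)) := by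
    intro x; rw [sampleProb, ← Finset.prod_mul_distrib]
  simp_rw [h]
  rw [← Fintype.prod_sum (fun (i : Fin n) (b : Bool) => (if b then f i else 1 - f i) * g i b)]
  simp

private lemma sum_sampleProb_one {n : ℕ} (f : Fin n → ℝ) :
    ∑ x : Fin n → Bool, sampleProb f x = 1 := by
  have := sum_sampleProb_mul f (fun _ _ => (1 : ℝ))
  simpa using this

private lemma pair_sum {n : ℕ} (f : Fin n → ℝ) (h : Fin n → Bool → Bool → ℝ) :
    ∑ x1 : Fin n → Bool, ∑ x2 : Fin n → Bool,
        sampleProb f x1 * sampleProb f x2 * ∏ i, h i (x1 i) (x2 i)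
      = ∏ i, (f i * (f i * h i true true + (1 - f i) * h i true false)
          + (1 - f i) * (f i * h i false true + (1 - f i) * h i false false)) := by
  have inner : ∀ x1 : Fin n → Bool,
      ∑ x2 : Fin n → Bool, sampleProb f x1 * sampleProb f x2 * ∏ i, h i (x1 i) (x2 i)
        = sampleProb f x1 * ∏ i, (f i * h i (x1 i) true + (1 - f i) * h i (x1 i) false) := by
    intro x1
    rw [← sum_sampleProb_mul f (fun i b => h i (x1 i) b), Finset.mul_sum]
    exact Finset.sum_congr rfl (fun x2 _ => by ring)
  simp_rw [inner]
  exact sum_sampleProb_mul f (fun i b => f i * h i b true + (1 - f i) * h i b false)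

end CgaAux
section CgaAux2

open scoped Classical

private lemma coord_step {n : ℕ} (hn : 2 ≤ n) {μ : ℝ} (hμ : 1 ≤ μ) (m : ℕ)
    (hm : (1 - 2 / (n : ℝ)) * μ = 2 * m) (k : ℕ) (hk : k ≤ 2 * m)
    (b1 b2 : Bool) {fi : ℝ} (hfi : fi = 1 / n + k / μ) :
    (∃ k' : ℕ, k' ≤ 2 * m ∧
        max (1 / (n : ℝ)) (min (fi + 1 / μ * (boolToR b1 - boolToR b2)) (1 - 1 / n))
          = 1 / n + (k' : ℝ) / μ) ∧
      fi - max (1 / (n : ℝ)) (min (fi + 1 / μ * (boolToR b1 - boolToR b2)) (1 - 1 / n))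
        ≤ -(boolToR b1 - boolToR b2) / μ
          + (if fi = 1 - 1 / (n : ℝ) ∧ b1 ≠ b2 then (1 : ℝ) else 0) / μ := by
  have hμ0 : (0 : ℝ) < μ := by linarith
  have h2n : (2 : ℝ) ≤ (n : ℝ) := by exact_mod_cast hn
  have hn0 : (0 : ℝ) < n := by linarith
  have hμinv : (0 : ℝ) < 1 / μ := by positivity
  have h2m : (2 * (m : ℝ)) / μ = 1 - 2 / n := by
    rw [div_eq_iff hμ0.ne']; linarith [hm]
  have htop : (1 : ℝ) - 1 / n = 1 / n + (2 * (m : ℝ)) / μ := by rw [h2m]; ring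
  have h1ntop : 1 / (n : ℝ) ≤ 1 - 1 / n := by
    have h1 : 2 / (n : ℝ) ≤ 1 := by rw [div_le_one hn0]; exact h2n
    have h2 : 1 / (n : ℝ) + 1 / n = 2 / n := by ring
    linarith
  have hkR : (k : ℝ) ≤ 2 * (m : ℝ) := by exact_mod_cast hk
  have hfige : 1 / (n : ℝ) ≤ fi := by
    rw [hfi]
    have : (0 : ℝ) ≤ (k : ℝ) / μ := by positivity
    linarith
  have hfile : fi ≤ 1 - 1 / n := by
    rw [hfi, htop]
    have : (k : ℝ) / μ ≤ 2 * (m : ℝ) / μ := by gcongr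
    linarith
  have hite : (0 : ℝ) ≤ (if fi = 1 - 1 / (n : ℝ) ∧ b1 ≠ b2 then (1 : ℝ) else 0) / μ := by
    split_ifs <;> positivity
  cases b1 <;> cases b2
  · -- false false
    have e : fi + 1 / μ * (boolToR false - boolToR false) = fi := by simp [boolToR]
    have e2 : -(boolToR false - boolToR false) / μ = 0 := by simp [boolToR]
    rw [e, e2, min_eq_left hfile, max_eq_right hfige]
    exact ⟨⟨k, hk, hfi⟩, by linarith [hite]⟩
  · -- false true
    have e : fi + 1 / μ * (boolToR false - boolToR true) = fi - 1 / μ := by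
      norm_num [boolToR]; try ring
    have e2 : -(boolToR false - boolToR true) / μ = 1 / μ := by
      simp [boolToR]
    rw [e, e2, min_eq_left (by linarith : fi - 1 / μ ≤ 1 - 1 / (n : ℝ))]
    constructor
    · by_cases hk0 : k = 0
      · have hfi0 : fi = 1 / (n : ℝ) := by rw [hfi, hk0]; simp
        refine ⟨0, Nat.zero_le _, ?_⟩
        rw [max_eq_left (by rw [hfi0]; linarith : fi - 1 / μ ≤ 1 / (n : ℝ))]
        simp
      · have hk1 : 1 ≤ k := Nat.one_le_iff_ne_zero.2 hk0
        have h2 : fi - 1 / μ = 1 / n + ((k - 1 : ℕ) : ℝ) / μ := by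
          rw [hfi, Nat.cast_sub hk1, Nat.cast_one]; ring
        refine ⟨k - 1, by omega, ?_⟩
        rw [max_eq_right ?_]
        · exact h2
        · rw [h2]
          have : (0 : ℝ) ≤ ((k - 1 : ℕ) : ℝ) / μ := by positivity
          linarith
    · have hmx := le_max_right (1 / (n : ℝ)) (fi - 1 / μ)
      linarith [hite]
  · -- true false
    have hne : (true ≠ false) := by simp
    have e : fi + 1 / μ * (boolToR true - boolToR false) = fi + 1 / μ := by
      norm_num [boolToR]; try ring
    have e2 : -(boolToR true - boolToR false) / μ = -(1 / μ) := by
      norm_num [boolToR]; try ring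
    rw [e, e2]
    by_cases hkm : k = 2 * m
    · have hfitop : fi = 1 - 1 / n := by
        rw [hfi, htop, hkm]; push_cast; ring
      have hmin : min (fi + 1 / μ) (1 - 1 / (n : ℝ)) = 1 - 1 / n :=
        min_eq_right (by rw [hfitop]; linarith)
      rw [hmin, max_eq_right h1ntop]
      constructor
      · refine ⟨2 * m, le_refl _, ?_⟩
        rw [htop]; push_cast; ring
      · rw [if_pos ⟨hfitop, hne⟩]
        linarith [hfitop]
    · have hk' : k + 1 ≤ 2 * m := by omega
      have h2 : fi + 1 / μ = 1 / n + ((k + 1 : ℕ) : ℝ) / μ := by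
        rw [hfi]; push_cast; ring
      have hle : fi + 1 / μ ≤ 1 - 1 / n := by
        rw [h2, htop]
        have hc : ((k + 1 : ℕ) : ℝ) ≤ 2 * (m : ℝ) := by exact_mod_cast hk'
        have h3 : ((k + 1 : ℕ) : ℝ) / μ ≤ 2 * (m : ℝ) / μ := by gcongr
        linarith
      rw [min_eq_left hle, max_eq_right (by linarith : 1 / (n : ℝ) ≤ fi + 1 / μ)]
      exact ⟨⟨k + 1, hk', h2⟩, by linarith [hite]⟩
  · -- true true
    have e : fi + 1 / μ * (boolToR true - boolToR true) = fi := by simp [boolToR]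
    have e2 : -(boolToR true - boolToR true) / μ = 0 := by simp [boolToR]
    rw [e, e2, min_eq_left hfile, max_eq_right hfige]
    exact ⟨⟨k, hk, hfi⟩, by linarith [hite]⟩

end CgaAux2
section CgaAux3

private lemma sqrt_hundred : Real.sqrt 100 = 10 := by
  rw [show (100 : ℝ) = 10 ^ 2 by norm_num, Real.sqrt_sq (by norm_num)]

private lemma ten_sqrt_le_eleven_sqrt {D : ℝ} (hD : 121 / 21 ≤ D) :
    10 * Real.sqrt D ≤ 11 * Real.sqrt (D - 1) := by
  have h1 : (10 : ℝ) * Real.sqrt D = Real.sqrt (100 * D) := by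
    rw [Real.sqrt_mul (by norm_num) D, sqrt_hundred]
  have h2 : (11 : ℝ) * Real.sqrt (D - 1) = Real.sqrt (121 * (D - 1)) := by
    rw [Real.sqrt_mul (by norm_num) (D - 1),
      show (121 : ℝ) = 11 ^ 2 by norm_num, Real.sqrt_sq (by norm_num)]
  rw [h1, h2]
  apply Real.sqrt_le_sqrt
  linarith

private lemma sqrt2_ge_one : (1 : ℝ) ≤ Real.sqrt 2 := by
  rw [show (1 : ℝ) = Real.sqrt 1 by rw [Real.sqrt_one]]
  exact Real.sqrt_le_sqrt (by norm_num)

private lemma sqrt2_le : Real.sqrt 2 ≤ 3 / 2 := by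
  rw [show (3 / 2 : ℝ) = Real.sqrt ((3 / 2) ^ 2) by rw [Real.sqrt_sq (by norm_num)]]
  exact Real.sqrt_le_sqrt (by norm_num)

private lemma sqrt2_ge : (7 / 5 : ℝ) ≤ Real.sqrt 2 := by
  rw [show (7 / 5 : ℝ) = Real.sqrt ((7 / 5) ^ 2) by rw [Real.sqrt_sq (by norm_num)]]
  exact Real.sqrt_le_sqrt (by norm_num)

set_option maxHeartbeats 1000000 in
private lemma drift_pointwise {C μ D D' gp T χ : ℝ} (hC : 0 < C) (hC1 : C ≤ 1)
    (hμ : 1 ≤ μ) (hD : 10000 / C ^ 2 < D) (hD' : 1 ≤ D')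
    (hT : 0 ≤ T) (hgp : 0 ≤ gp)
    (hstep : D' ≤ D - gp / μ + T / μ)
    (hχ : χ = 0 ∨ (χ = 1 ∧ Real.sqrt (D - 1) / 5 ≤ gp)) :
    μ / 2 * Real.sqrt D' ≤
      μ / 2 * Real.sqrt D + Real.sqrt 2 * C / 400 * T - 1 / 22 * χ := by
  have hμ0 : (0 : ℝ) < μ := by linarith
  have hs2 := sqrt2_ge_one
  have hs2' := sqrt2_le
  have hs2pos : (0 : ℝ) < Real.sqrt 2 := by linarith
  have hsqC : Real.sqrt (10000 / C ^ 2) = 100 / C := by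
    rw [show (10000 : ℝ) / C ^ 2 = (100 / C) ^ 2 by rw [div_pow]; norm_num]
    exact Real.sqrt_sq (by positivity)
  have hDlarge : (10000 : ℝ) < D := by
    have h1 : (10000 : ℝ) ≤ 10000 / C ^ 2 := by
      rw [le_div_iff₀ (by positivity)]
      nlinarith
    linarith
  have hD0 : (0 : ℝ) < D := by linarith
  have hsD : 100 / C ≤ Real.sqrt D := by
    rw [← hsqC]; exact Real.sqrt_le_sqrt hD.le
  have hsD0 : (0 : ℝ) < Real.sqrt D := lt_of_lt_of_le (by positivity) hsD
  -- reduce to the sqrt-scale inequality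
  suffices h : Real.sqrt D' ≤
      Real.sqrt D + Real.sqrt 2 * C / (200 * μ) * T - 1 / (11 * μ) * χ by
    have h2 := mul_le_mul_of_nonneg_left h (by positivity : (0 : ℝ) ≤ μ / 2)
    have e1 : μ / 2 * (Real.sqrt D + Real.sqrt 2 * C / (200 * μ) * T - 1 / (11 * μ) * χ)
        = μ / 2 * Real.sqrt D + Real.sqrt 2 * C / 400 * T - 1 / 22 * χ := by
      field_simp
      ring
    linarith [e1 ▸ h2]
  -- coefficient fact : 1 / (2 * sqrt D) ≤ sqrt 2 * C / 400  (times suitable constants)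
  have hcoef : Real.sqrt 2 / (2 * Real.sqrt D) ≤ Real.sqrt 2 * C / 200 := by
    rw [div_le_div_iff₀ (by positivity) (by norm_num)]
    have : Real.sqrt 2 * C * (2 * (100 / C)) ≤ Real.sqrt 2 * C * (2 * Real.sqrt D) := by
      gcongr
    have e : Real.sqrt 2 * C * (2 * (100 / C)) = 200 * Real.sqrt 2 := by
      field_simp; try ring
    linarith [e ▸ this]
  rcases hχ with hχ0 | ⟨hχ1, hgE⟩
  · -- no-event case
    subst hχ0
    have h1 : D' ≤ D + T / μ := by
      have : (0 : ℝ) ≤ gp / μ := by positivity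
      linarith
    have h2 : Real.sqrt D' ≤ Real.sqrt (D + T / μ) := Real.sqrt_le_sqrt h1
    have h3 : Real.sqrt (D + T / μ) ≤ Real.sqrt D + (T / μ) / (2 * Real.sqrt D) :=
      sqrt_add_le' hD0 (by positivity)
    have h4 : (T / μ) / (2 * Real.sqrt D) ≤ Real.sqrt 2 * C / (200 * μ) * T := by
      have e1 : (T / μ) / (2 * Real.sqrt D) = (T / μ) * (1 / (2 * Real.sqrt D)) := by ring
      have e2 : Real.sqrt 2 * C / (200 * μ) * T = (T / μ) * (Real.sqrt 2 * C / 200) := by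
        field_simp; try ring
      rw [e1, e2]
      apply mul_le_mul_of_nonneg_left _ (by positivity)
      calc 1 / (2 * Real.sqrt D) ≤ Real.sqrt 2 / (2 * Real.sqrt D) := by gcongr
      _ ≤ Real.sqrt 2 * C / 200 := hcoef
    have := h2.trans h3
    simp only [mul_zero, sub_zero]
    linarith
  · -- event case
    subst hχ1
    set γ : ℝ := min (gp / μ) (D / 2) with hγ
    have hγ0 : 0 ≤ γ := le_min (by positivity) (by positivity)
    have hγD2 : γ ≤ D / 2 := min_le_right _ _
    have hγgp : γ ≤ gp / μ := min_le_left _ _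
    have hDγ : D / 2 ≤ D - γ := by linarith
    have hDγ0 : 0 < D - γ := by linarith
    have h1 : D' ≤ (D - γ) + T / μ := by linarith
    have h2 : Real.sqrt D' ≤ Real.sqrt ((D - γ) + T / μ) := Real.sqrt_le_sqrt h1
    have h3 : Real.sqrt ((D - γ) + T / μ)
        ≤ Real.sqrt (D - γ) + (T / μ) / (2 * Real.sqrt (D - γ)) :=
      sqrt_add_le' hDγ0 (by positivity)
    have h4 : Real.sqrt (D - γ) ≤ Real.sqrt D - γ / (2 * Real.sqrt D) :=
      sqrt_sub_le' hD0 hγ0 (by linarith)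
    -- bound the T-term
    have hsD2 : Real.sqrt (D / 2) ≤ Real.sqrt (D - γ) := Real.sqrt_le_sqrt hDγ
    have hsD2pos : 0 < Real.sqrt (D / 2) := Real.sqrt_pos.2 (by linarith)
    have h5 : (T / μ) / (2 * Real.sqrt (D - γ)) ≤ (T / μ) / (2 * Real.sqrt (D / 2)) :=
      div_le_div_of_nonneg_left (by positivity) (by positivity) (by linarith)
    have hdiv : Real.sqrt (D / 2) = Real.sqrt D / Real.sqrt 2 := Real.sqrt_div hD0.le 2
    have h6 : (T / μ) / (2 * Real.sqrt (D / 2)) ≤ Real.sqrt 2 * C / (200 * μ) * T := by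
      rw [hdiv]
      have e1 : (T / μ) / (2 * (Real.sqrt D / Real.sqrt 2))
          = (T / μ) * (Real.sqrt 2 / (2 * Real.sqrt D)) := by
        field_simp; try ring
      have e2 : Real.sqrt 2 * C / (200 * μ) * T = (T / μ) * (Real.sqrt 2 * C / 200) := by
        field_simp; try ring
      rw [e1, e2]
      exact mul_le_mul_of_nonneg_left hcoef (by positivity)
    -- bound the gain term
    have hsDD : Real.sqrt D ≤ D := by
      have := Real.sqrt_le_sqrt (show D ≤ D ^ 2 by nlinarith)
      rwa [Real.sqrt_sq hD0.le] at this
    have hr2 : Real.sqrt (D - 1) / (5 * μ) ≤ D / 2 := by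
      have hA : Real.sqrt (D - 1) ≤ Real.sqrt D := Real.sqrt_le_sqrt (by linarith)
      have hB : Real.sqrt (D - 1) / (5 * μ) ≤ D / (5 * μ) := by gcongr; linarith
      have hCk : D / (5 * μ) ≤ D / 2 := by
        apply div_le_div_of_nonneg_left hD0.le (by norm_num) (by linarith)
      linarith
    have hr1 : Real.sqrt (D - 1) / (5 * μ) ≤ gp / μ := by
      rw [← div_div]
      exact (div_le_div_iff_of_pos_right hμ0).mpr hgE
    have hγge : Real.sqrt (D - 1) / (5 * μ) ≤ γ := le_min hr1 hr2
    have h7 : 1 / (11 * μ) ≤ γ / (2 * Real.sqrt D) := by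
      have h10 := ten_sqrt_le_eleven_sqrt (show (121 : ℝ) / 21 ≤ D by linarith)
      have hkey : Real.sqrt (D - 1) / (5 * μ) / (2 * Real.sqrt D) ≥ 1 / (11 * μ) := by
        rw [ge_iff_le, div_le_div_iff₀ (by positivity) (by positivity)]
        have expand : Real.sqrt (D - 1) / (5 * μ) * (11 * μ)
            = 11 / 5 * Real.sqrt (D - 1) := by field_simp; try ring
        rw [expand]
        linarith [h10]
      have hmono : Real.sqrt (D - 1) / (5 * μ) / (2 * Real.sqrt D)
          ≤ γ / (2 * Real.sqrt D) := by gcongr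
      linarith
    linarith
end CgaAux3
section CgaAux4

open scoped Classical

private lemma sampleProb_nonneg {n : ℕ} {f : Fin n → ℝ} (hf0 : ∀ i, 0 ≤ f i)
    (hf1 : ∀ i, f i ≤ 1) (x : Fin n → Bool) : 0 ≤ sampleProb f x := by
  apply Finset.prod_nonneg
  intro i _
  split_ifs
  · exact hf0 i
  · linarith [hf1 i]

private lemma sqrt_exp_eq (x : ℝ) : Real.sqrt (Real.exp x) = Real.exp (x / 2) := by
  rw [show Real.exp x = Real.exp (x / 2) * Real.exp (x / 2) by
    rw [← Real.exp_add]; ring_nf]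
  exact Real.sqrt_mul_self (Real.exp_pos _).le

private lemma double_eq_pair {n : ℕ} (G : (Fin n → Bool) → (Fin n → Bool) → ℝ) :
    ∑ p : (Fin n → Bool) × (Fin n → Bool), G p.1 p.2 = ∑ x1, ∑ x2, G x1 x2 :=
  Fintype.sum_prod_type _

private lemma cs_double {n : ℕ} {f : Fin n → ℝ} (hw : ∀ x, 0 ≤ sampleProb f x)
    (U V : (Fin n → Bool) → (Fin n → Bool) → ℝ) :
    ∑ x1, ∑ x2, sampleProb f x1 * sampleProb f x2 * (U x1 x2 * V x1 x2)
      ≤ Real.sqrt (∑ x1, ∑ x2, sampleProb f x1 * sampleProb f x2 * U x1 x2 ^ 2)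
        * Real.sqrt (∑ x1, ∑ x2, sampleProb f x1 * sampleProb f x2 * V x1 x2 ^ 2) := by
  rw [← double_eq_pair (fun x1 x2 => sampleProb f x1 * sampleProb f x2 * (U x1 x2 * V x1 x2)),
      ← double_eq_pair (fun x1 x2 => sampleProb f x1 * sampleProb f x2 * U x1 x2 ^ 2),
      ← double_eq_pair (fun x1 x2 => sampleProb f x1 * sampleProb f x2 * V x1 x2 ^ 2)]
  have h := Real.sum_mul_le_sqrt_mul_sqrt
      (Finset.univ : Finset ((Fin n → Bool) × (Fin n → Bool)))
      (fun p => Real.sqrt (sampleProb f p.1 * sampleProb f p.2) * U p.1 p.2)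
      (fun p => Real.sqrt (sampleProb f p.1 * sampleProb f p.2) * V p.1 p.2)
  have e1 : ∀ p : (Fin n → Bool) × (Fin n → Bool),
      (Real.sqrt (sampleProb f p.1 * sampleProb f p.2) * U p.1 p.2)
        * (Real.sqrt (sampleProb f p.1 * sampleProb f p.2) * V p.1 p.2)
      = sampleProb f p.1 * sampleProb f p.2 * (U p.1 p.2 * V p.1 p.2) := by
    intro p
    have hs := Real.mul_self_sqrt (mul_nonneg (hw p.1) (hw p.2))
    linear_combination (U p.1 p.2 * V p.1 p.2) * hs
  have e2 : ∀ p : (Fin n → Bool) × (Fin n → Bool),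
      (Real.sqrt (sampleProb f p.1 * sampleProb f p.2) * U p.1 p.2) ^ 2
      = sampleProb f p.1 * sampleProb f p.2 * U p.1 p.2 ^ 2 := by
    intro p
    have hs := Real.mul_self_sqrt (mul_nonneg (hw p.1) (hw p.2))
    linear_combination (U p.1 p.2 ^ 2) * hs
  have e3 : ∀ p : (Fin n → Bool) × (Fin n → Bool),
      (Real.sqrt (sampleProb f p.1 * sampleProb f p.2) * V p.1 p.2) ^ 2
      = sampleProb f p.1 * sampleProb f p.2 * V p.1 p.2 ^ 2 := by
    intro p
    have hs := Real.mul_self_sqrt (mul_nonneg (hw p.1) (hw p.2))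
    linear_combination (V p.1 p.2 ^ 2) * hs
  simp_rw [e1, e2, e3] at h
  exact h

private lemma factor_bound {fi inv e : ℝ} (h0 : 0 ≤ fi) (h1 : fi ≤ 1) (he : 1 ≤ e)
    (hinv0 : 0 ≤ inv) (c : Prop) [Decidable c] (hc : c → fi = 1 - inv) :
    fi * (fi * 1 + (1 - fi) * (if c then e else 1))
      + (1 - fi) * (fi * (if c then e else 1) + (1 - fi) * 1)
    ≤ Real.exp (2 * inv * (e - 1)) := by
  have hx := Real.add_one_le_exp (2 * inv * (e - 1))
  split_ifs with h
  · have hfi := hc h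
    have key : fi * (fi * 1 + (1 - fi) * e) + (1 - fi) * (fi * e + (1 - fi) * 1)
        = 1 + 2 * fi * (1 - fi) * (e - 1) := by ring
    rw [key, hfi]
    nlinarith [hx, mul_nonneg (mul_nonneg hinv0 hinv0) (sub_nonneg.2 he)]
  · nlinarith [hx, mul_nonneg hinv0 (sub_nonneg.2 he)]

set_option maxHeartbeats 1000000 in
private lemma SU_bound {n : ℕ} (hn : 2 ≤ n) {C : ℝ} (hC : 0 < C) (hC1 : C ≤ 1)
    (f : Fin n → ℝ) (hf0 : ∀ i, 0 ≤ f i) (hf1 : ∀ i, f i ≤ 1) :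
    ∑ x1 : Fin n → Bool, ∑ x2 : Fin n → Bool,
        sampleProb f x1 * sampleProb f x2 *
          (Real.exp (Real.sqrt 2 * C / 400 *
            ∑ i, (if f i = 1 - 1 / (n : ℝ) ∧ x1 i ≠ x2 i then (1 : ℝ) else 0))) ^ 2
      ≤ Real.exp (C / 60) := by
  have hn0 : (0 : ℝ) < n := by
    have : (2 : ℝ) ≤ (n : ℝ) := by exact_mod_cast hn
    linarith
  have hs2 := sqrt2_ge_one
  have hs2' := sqrt2_le
  have ha0 : (0:ℝ) ≤ Real.sqrt 2 * C / 400 := by positivity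
  have h2a : 2 * (Real.sqrt 2 * C / 400) ≤ 1 / 100 := by nlinarith
  have h2a0 : (0:ℝ) ≤ 2 * (Real.sqrt 2 * C / 400) := by linarith
  have hexp1 : (1 : ℝ) ≤ Real.exp (2 * (Real.sqrt 2 * C / 400)) :=
    Real.one_le_exp h2a0
  have e1 : ∀ x1 x2 : Fin n → Bool,
      sampleProb f x1 * sampleProb f x2 * (Real.exp (Real.sqrt 2 * C / 400 *
        ∑ i, (if f i = 1 - 1 / (n : ℝ) ∧ x1 i ≠ x2 i then (1 : ℝ) else 0))) ^ 2
      = sampleProb f x1 * sampleProb f x2 *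
          ∏ i, (if f i = 1 - 1 / (n : ℝ) ∧ x1 i ≠ x2 i
            then Real.exp (2 * (Real.sqrt 2 * C / 400)) else 1) := by
    intro x1 x2
    congr 1
    rw [sq, ← Real.exp_add, ← two_mul]
    have e0 : (2:ℝ) * (Real.sqrt 2 * C / 400 *
        ∑ i, (if f i = 1 - 1 / (n : ℝ) ∧ x1 i ≠ x2 i then (1 : ℝ) else 0))
        = ∑ i, 2 * (Real.sqrt 2 * C / 400) *
            (if f i = 1 - 1 / (n : ℝ) ∧ x1 i ≠ x2 i then (1 : ℝ) else 0) := by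
      rw [Finset.mul_sum, Finset.mul_sum]
      exact Finset.sum_congr rfl (fun i _ => by ring)
    rw [e0, Real.exp_sum]
    apply Finset.prod_congr rfl
    intro i _
    split_ifs
    · rw [mul_one]
    · rw [mul_zero, Real.exp_zero]
  simp_rw [e1]
  rw [pair_sum f (fun i b1 b2 => if f i = 1 - 1 / (n : ℝ) ∧ b1 ≠ b2
      then Real.exp (2 * (Real.sqrt 2 * C / 400)) else 1)]
  have hclean : ∀ i : Fin n,
      (f i * (f i * (if f i = 1 - 1/(n:ℝ) ∧ (true:Bool) ≠ true
            then Real.exp (2 * (Real.sqrt 2 * C / 400)) else 1)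
        + (1 - f i) * (if f i = 1 - 1/(n:ℝ) ∧ (true:Bool) ≠ false
            then Real.exp (2 * (Real.sqrt 2 * C / 400)) else 1))
      + (1 - f i) * (f i * (if f i = 1 - 1/(n:ℝ) ∧ (false:Bool) ≠ true
            then Real.exp (2 * (Real.sqrt 2 * C / 400)) else 1)
        + (1 - f i) * (if f i = 1 - 1/(n:ℝ) ∧ (false:Bool) ≠ false
            then Real.exp (2 * (Real.sqrt 2 * C / 400)) else 1)))
      = f i * (f i * 1 + (1 - f i) * (if f i = 1 - 1/(n:ℝ)
            then Real.exp (2 * (Real.sqrt 2 * C / 400)) else 1))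
      + (1 - f i) * (f i * (if f i = 1 - 1/(n:ℝ)
            then Real.exp (2 * (Real.sqrt 2 * C / 400)) else 1) + (1 - f i) * 1) := by
    intro i
    have c1 : (if f i = 1 - 1/(n:ℝ) ∧ (true:Bool) ≠ true
        then Real.exp (2 * (Real.sqrt 2 * C / 400)) else 1) = 1 := if_neg (by simp)
    have c4 : (if f i = 1 - 1/(n:ℝ) ∧ (false:Bool) ≠ false
        then Real.exp (2 * (Real.sqrt 2 * C / 400)) else 1) = 1 := if_neg (by simp)
    have c2 : (if f i = 1 - 1/(n:ℝ) ∧ (true:Bool) ≠ false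
        then Real.exp (2 * (Real.sqrt 2 * C / 400)) else 1)
        = (if f i = 1 - 1/(n:ℝ) then Real.exp (2 * (Real.sqrt 2 * C / 400)) else 1) :=
      if_congr (and_iff_left (by simp)) rfl rfl
    have c3 : (if f i = 1 - 1/(n:ℝ) ∧ (false:Bool) ≠ true
        then Real.exp (2 * (Real.sqrt 2 * C / 400)) else 1)
        = (if f i = 1 - 1/(n:ℝ) then Real.exp (2 * (Real.sqrt 2 * C / 400)) else 1) :=
      if_congr (and_iff_left (by simp)) rfl rfl
    rw [c1, c2, c3, c4]
  rw [Finset.prod_congr rfl (fun i _ => hclean i)]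
  have step1 := Finset.prod_le_prod (s := Finset.univ)
    (f := fun i => f i * (f i * 1 + (1 - f i) * (if f i = 1 - 1/(n:ℝ)
            then Real.exp (2 * (Real.sqrt 2 * C / 400)) else 1))
      + (1 - f i) * (f i * (if f i = 1 - 1/(n:ℝ)
            then Real.exp (2 * (Real.sqrt 2 * C / 400)) else 1) + (1 - f i) * 1))
    (g := fun _ => Real.exp (2 * (1/(n:ℝ)) * (Real.exp (2 * (Real.sqrt 2 * C / 400)) - 1)))
    (fun i _ => by
      have h1f : (0:ℝ) ≤ 1 - f i := by linarith [hf1 i]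
      split_ifs with h
      · nlinarith [hf0 i, sq_nonneg (f i), sq_nonneg (1 - f i),
          mul_nonneg (mul_nonneg (hf0 i) h1f) (Real.exp_pos (2 * (Real.sqrt 2 * C / 400))).le]
      · nlinarith [hf0 i, sq_nonneg (f i), sq_nonneg (1 - f i), mul_nonneg (hf0 i) h1f])
    (fun i _ => factor_bound (hf0 i) (hf1 i) hexp1 (by positivity) _ (fun h => h))
  refine le_trans step1 ?_
  rw [Finset.prod_const, Finset.card_univ, Fintype.card_fin, ← Real.exp_nat_mul]
  apply Real.exp_le_exp.mpr
  have e7 : (n : ℝ) * (2 * (1/(n:ℝ)) * (Real.exp (2 * (Real.sqrt 2 * C / 400)) - 1))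
      = 2 * (Real.exp (2 * (Real.sqrt 2 * C / 400)) - 1) := by
    field_simp
  rw [e7]
  have hpos : (0 : ℝ) < 1 - 2 * (Real.sqrt 2 * C / 400) := by linarith
  have hea : Real.exp (2 * (Real.sqrt 2 * C / 400)) ≤ 1 / (1 - 2 * (Real.sqrt 2 * C / 400)) := by
    have hx : 1 - 2 * (Real.sqrt 2 * C / 400) ≤ Real.exp (-(2 * (Real.sqrt 2 * C / 400))) := by
      linarith [Real.add_one_le_exp (-(2 * (Real.sqrt 2 * C / 400)))]
    rw [Real.exp_neg] at hx
    rw [le_div_iff₀ hpos]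
    calc Real.exp (2 * (Real.sqrt 2 * C / 400)) * (1 - 2 * (Real.sqrt 2 * C / 400))
        ≤ Real.exp (2 * (Real.sqrt 2 * C / 400)) * (Real.exp (2 * (Real.sqrt 2 * C / 400)))⁻¹ :=
          mul_le_mul_of_nonneg_left hx (Real.exp_pos _).le
      _ = 1 := mul_inv_cancel₀ (Real.exp_pos _).ne'
  have h240 : 240 * (Real.sqrt 2 * C / 400) ≤ C * (1 - 2 * (Real.sqrt 2 * C / 400)) := by
    nlinarith
  have hfrac : 4 * (Real.sqrt 2 * C / 400) / (1 - 2 * (Real.sqrt 2 * C / 400)) ≤ C / 60 := by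
    rw [div_le_div_iff₀ hpos (by norm_num)]
    linarith
  have e8 : 1 / (1 - 2 * (Real.sqrt 2 * C / 400)) - 1
      = 2 * (Real.sqrt 2 * C / 400) / (1 - 2 * (Real.sqrt 2 * C / 400)) := by
    rw [eq_div_iff (ne_of_gt hpos), sub_mul, one_mul, one_div,
      inv_mul_cancel₀ (ne_of_gt hpos)]
    ring
  have e9 : 2 * (2 * (Real.sqrt 2 * C / 400) / (1 - 2 * (Real.sqrt 2 * C / 400)))
      = 4 * (Real.sqrt 2 * C / 400) / (1 - 2 * (Real.sqrt 2 * C / 400)) := by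
    ring
  linarith [hea, hfrac, e8, e9]

private lemma SV_bound {n : ℕ} {C : ℝ} (hC : 0 < C) (hC1 : C ≤ 1)
    (f : Fin n → ℝ) (hf0 : ∀ i, 0 ≤ f i) (hf1 : ∀ i, f i ≤ 1)
    (Es : Set ((Fin n → Bool) × (Fin n → Bool))) (hP : C ≤ prPair f Es) :
    ∑ x1 : Fin n → Bool, ∑ x2 : Fin n → Bool,
        sampleProb f x1 * sampleProb f x2 *
          (Real.exp (-(1 / 22) * (if (x1, x2) ∈ Es then (1 : ℝ) else 0))) ^ 2
      ≤ Real.exp (-(C / 12)) := by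
  set e' : ℝ := Real.exp (-(1 / 11)) with he'
  have e1 : ∀ x1 x2 : Fin n → Bool,
      sampleProb f x1 * sampleProb f x2 *
          (Real.exp (-(1 / 22) * (if (x1, x2) ∈ Es then (1 : ℝ) else 0))) ^ 2
      = sampleProb f x1 * sampleProb f x2
        - (1 - e') * (if (x1, x2) ∈ Es then sampleProb f x1 * sampleProb f x2 else 0) := by
    intro x1 x2
    by_cases hp : (x1, x2) ∈ Es
    · rw [if_pos hp, if_pos hp, mul_one, sq, ← Real.exp_add,
        show (-(1/22) + -(1/22) : ℝ) = -(1/11) by norm_num, he']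
      ring
    · rw [if_neg hp, if_neg hp, mul_zero, Real.exp_zero, one_pow]
      ring
  simp_rw [e1]
  have hsplit : ∑ x1 : Fin n → Bool, ∑ x2 : Fin n → Bool,
      (sampleProb f x1 * sampleProb f x2
        - (1 - e') * (if (x1, x2) ∈ Es then sampleProb f x1 * sampleProb f x2 else 0))
      = (∑ x1 : Fin n → Bool, ∑ x2 : Fin n → Bool, sampleProb f x1 * sampleProb f x2)
        - (1 - e') * ∑ x1 : Fin n → Bool, ∑ x2 : Fin n → Bool,
            (if (x1, x2) ∈ Es then sampleProb f x1 * sampleProb f x2 else 0) := by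
    rw [Finset.mul_sum, ← Finset.sum_sub_distrib]
    apply Finset.sum_congr rfl
    intro x1 _
    rw [Finset.mul_sum, ← Finset.sum_sub_distrib]
  rw [hsplit]
  have htot : (∑ x1 : Fin n → Bool, ∑ x2 : Fin n → Bool,
      sampleProb f x1 * sampleProb f x2) = 1 := by
    have : ∀ x1 : Fin n → Bool, (∑ x2 : Fin n → Bool, sampleProb f x1 * sampleProb f x2)
        = sampleProb f x1 := by
      intro x1; rw [← Finset.mul_sum, sum_sampleProb_one, mul_one]
    simp_rw [this]
    exact sum_sampleProb_one f
  have hpr : prPair f Es = ∑ x1 : Fin n → Bool, ∑ x2 : Fin n → Bool,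
      (if (x1, x2) ∈ Es then sampleProb f x1 * sampleProb f x2 else 0) := by
    rw [prPair, ← double_eq_pair (fun x1 x2 =>
      (if (x1, x2) ∈ Es then sampleProb f x1 * sampleProb f x2 else 0))]
    apply Finset.sum_congr rfl
    intro p _
    rw [Set.indicator_apply]
  rw [htot, ← hpr]
  have h11 : e' ≤ 11 / 12 := by
    rw [he', Real.exp_neg]
    have hge : (12 : ℝ) / 11 ≤ Real.exp (1 / 11) := by
      linarith [Real.add_one_le_exp ((1 : ℝ) / 11)]
    calc (Real.exp ((1:ℝ) / 11))⁻¹ ≤ ((12 : ℝ) / 11)⁻¹ := by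
          apply inv_anti₀ (by norm_num) hge
      _ = 11 / 12 := by norm_num
  have hstep : 1 - (1 - e') * prPair f Es ≤ 1 - (1 - e') * C := by
    have : (1 - e') * C ≤ (1 - e') * prPair f Es :=
      mul_le_mul_of_nonneg_left hP (by linarith)
    linarith
  have hC12 : C / 12 ≤ (1 - e') * C := by nlinarith
  have hfin := Real.add_one_le_exp (-(C / 12))
  linarith

set_option maxHeartbeats 1000000 in
private lemma step_expectation {n : ℕ} (hn : 2 ≤ n) {C : ℝ} (hC : 0 < C) (hC1 : C ≤ 1)
    (f : Fin n → ℝ) (hf0 : ∀ i, 0 ≤ f i) (hf1 : ∀ i, f i ≤ 1)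
    (Es : Set ((Fin n → Bool) × (Fin n → Bool)))
    (hP : C ≤ prPair f Es) :
    ∑ x1 : Fin n → Bool, ∑ x2 : Fin n → Bool,
        sampleProb f x1 * sampleProb f x2 *
          (Real.exp (Real.sqrt 2 * C / 400 *
              ∑ i, (if f i = 1 - 1 / (n : ℝ) ∧ x1 i ≠ x2 i then (1 : ℝ) else 0)) *
            Real.exp (-(1 / 22) * (if (x1, x2) ∈ Es then (1 : ℝ) else 0)))
      ≤ Real.exp (-(C / 30)) := by
  have hw := sampleProb_nonneg hf0 hf1
  have hcs := cs_double (f := f) hw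
    (fun x1 x2 => Real.exp (Real.sqrt 2 * C / 400 *
        ∑ i, (if f i = 1 - 1 / (n : ℝ) ∧ x1 i ≠ x2 i then (1 : ℝ) else 0)))
    (fun x1 x2 => Real.exp (-(1 / 22) * (if (x1, x2) ∈ Es then (1 : ℝ) else 0)))
  refine le_trans hcs ?_
  have h1 := SU_bound hn hC hC1 f hf0 hf1
  have h2 := SV_bound hC hC1 f hf0 hf1 Es hP
  calc Real.sqrt (∑ x1 : Fin n → Bool, ∑ x2 : Fin n → Bool,
          sampleProb f x1 * sampleProb f x2 *
            (Real.exp (Real.sqrt 2 * C / 400 *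
              ∑ i, (if f i = 1 - 1 / (n : ℝ) ∧ x1 i ≠ x2 i then (1 : ℝ) else 0))) ^ 2)
        * Real.sqrt (∑ x1 : Fin n → Bool, ∑ x2 : Fin n → Bool,
          sampleProb f x1 * sampleProb f x2 *
            (Real.exp (-(1 / 22) * (if (x1, x2) ∈ Es then (1 : ℝ) else 0))) ^ 2)
      ≤ Real.sqrt (Real.exp (C / 60)) * Real.sqrt (Real.exp (-(C / 12))) := by
        apply mul_le_mul (Real.sqrt_le_sqrt h1) (Real.sqrt_le_sqrt h2)
          (Real.sqrt_nonneg _) (Real.sqrt_nonneg _)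
    _ = Real.exp (-(C / 30)) := by
        rw [sqrt_exp_eq, sqrt_exp_eq, ← Real.exp_add]
        congr 1
        ring

end CgaAux4
section CgaAux5

open scoped Classical

set_option maxHeartbeats 2000000 in
private lemma cga_key {C : ℝ} (hC : 0 < C) (hC1 : C ≤ 1)
    (hdroste : ∀ (m D : ℕ) (g : Fin m → ℝ), (∀ i, 1 / 3 ≤ g i ∧ g i ≤ 1) →
      (∑ i, g i) ≤ (m : ℝ) - (D : ℝ) →
      C ≤ prPair g {p | (1 / 5) * Real.sqrt D ≤
            |(numOnes p.1 : ℝ) - (numOnes p.2 : ℝ)|})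
    {n : ℕ} (hn : 2 ≤ n) {μ : ℝ} (hμ : 1 ≤ μ) (m : ℕ)
    (hm : (1 - 2 / (n : ℝ)) * μ = 2 * m) :
    ∀ N (f : Fin n → ℝ), (∀ i, ∃ k : ℕ, k ≤ 2 * m ∧ f i = 1 / n + (k : ℝ) / μ) →
      prNoStop (oneMax (n := n)) μ (10000 / C ^ 2) N f ≤
        Real.exp (-(C / 30)) ^ N *
          Real.exp (μ / 2 * Real.sqrt ((n : ℝ) - ∑ i, f i)) := by
  have hμ0 : (0 : ℝ) < μ := by linarith
  have h2n : (2 : ℝ) ≤ (n : ℝ) := by exact_mod_cast hn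
  have hn0 : (0 : ℝ) < n := by linarith
  have h2m : (2 * (m : ℝ)) / μ = 1 - 2 / n := by
    rw [div_eq_iff hμ0.ne']; linarith [hm]
  have htopg : (1 : ℝ) - 1 / n = 1 / n + (2 * (m : ℝ)) / μ := by rw [h2m]; ring
  intro N
  induction N with
  | zero =>
    intro f _
    simp only [prNoStop, pow_zero, one_mul]
    exact Real.one_le_exp (mul_nonneg (by linarith) (Real.sqrt_nonneg _))
  | succ N ih =>
    intro f hf
    have hfl : ∀ i, 1 / (n : ℝ) ≤ f i := by
      intro i; obtain ⟨k, hk, e⟩ := hf i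
      rw [e]
      have : (0 : ℝ) ≤ (k : ℝ) / μ := by positivity
      linarith
    have hfu : ∀ i, f i ≤ 1 - 1 / (n : ℝ) := by
      intro i; obtain ⟨k, hk, e⟩ := hf i
      rw [e, htopg]
      have hkR : (k : ℝ) ≤ 2 * (m : ℝ) := by exact_mod_cast hk
      have : (k : ℝ) / μ ≤ 2 * (m : ℝ) / μ := by gcongr
      linarith
    have hf0 : ∀ i, 0 ≤ f i := fun i => le_trans (by positivity) (hfl i)
    have hf1 : ∀ i, f i ≤ 1 := fun i => by
      have h1n : (0 : ℝ) < 1 / (n : ℝ) := by positivity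
      linarith [hfu i]
    have hw := sampleProb_nonneg hf0 hf1
    simp only [prNoStop]
    split_ifs with hstop
    · positivity
    · push_neg at hstop
      obtain ⟨hDgt, hf3⟩ := hstop
      set Dd : ℝ := (n : ℝ) - ∑ i, f i with hDdd
      have hDd0 : 0 ≤ Dd := by
        have h10000 : (10000 : ℝ) ≤ 10000 / C ^ 2 := by
          rw [le_div_iff₀ (by positivity)]; nlinarith
        linarith
      set Dnat : ℕ := ⌊Dd⌋₊ with hDnat
      set Es : Set ((Fin n → Bool) × (Fin n → Bool)) :=
        {p | (1 / 5) * Real.sqrt Dnat ≤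
          |(numOnes p.1 : ℝ) - (numOnes p.2 : ℝ)|} with hEs
      have hP : C ≤ prPair f Es := by
        apply hdroste n Dnat f (fun i => ⟨hf3 i, hf1 i⟩)
        have hfloor : (Dnat : ℝ) ≤ Dd := Nat.floor_le hDd0
        have : (∑ i, f i) = (n : ℝ) - Dd := by rw [hDdd]; ring
        linarith
      -- coordinate facts
      have hcoord : ∀ (x1 x2 : Fin n → Bool) (i : Fin n),
          (∃ k' : ℕ, k' ≤ 2 * m ∧ cgaStep oneMax μ f x1 x2 i = 1 / n + (k' : ℝ) / μ) ∧
          f i - cgaStep oneMax μ f x1 x2 i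
            ≤ -(boolToR ((ySel oneMax x1 x2).1 i) - boolToR ((ySel oneMax x1 x2).2 i)) / μ
              + (if f i = 1 - 1 / (n : ℝ) ∧
                    (ySel oneMax x1 x2).1 i ≠ (ySel oneMax x1 x2).2 i
                  then (1 : ℝ) else 0) / μ := by
        intro x1 x2 i
        obtain ⟨k, hk, e⟩ := hf i
        exact coord_step hn hμ m hm k hk _ _ e
      have hyne : ∀ (x1 x2 : Fin n → Bool) (i : Fin n),
          ((ySel oneMax x1 x2).1 i ≠ (ySel oneMax x1 x2).2 i) ↔ (x1 i ≠ x2 i) := by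
        intro x1 x2 i
        unfold ySel
        split_ifs <;> simp [ne_comm]
      have hbool : ∀ y : Fin n → Bool, (∑ i, boolToR (y i)) = (numOnes y : ℝ) := by
        intro y
        simp [numOnes, boolToR]
      -- upper bound on new frequencies
      have hfu' : ∀ (x1 x2 : Fin n → Bool) (i : Fin n),
          cgaStep oneMax μ f x1 x2 i ≤ 1 - 1 / (n : ℝ) := by
        intro x1 x2 i
        obtain ⟨k', hk', e⟩ := (hcoord x1 x2 i).1
        rw [e, htopg]
        have hkR : (k' : ℝ) ≤ 2 * (m : ℝ) := by exact_mod_cast hk'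
        have : (k' : ℝ) / μ ≤ 2 * (m : ℝ) / μ := by gcongr
        linarith
      have hD'1 : ∀ x1 x2 : Fin n → Bool,
          1 ≤ (n : ℝ) - ∑ i, cgaStep oneMax μ f x1 x2 i := by
        intro x1 x2
        have hs : (∑ i, cgaStep oneMax μ f x1 x2 i)
            ≤ ∑ _i : Fin n, (1 - 1 / (n : ℝ)) :=
          Finset.sum_le_sum (fun i _ => hfu' x1 x2 i)
        rw [Finset.sum_const, Finset.card_univ, Fintype.card_fin, nsmul_eq_mul] at hs
        have e : (n : ℝ) * (1 - 1 / n) = n - 1 := by field_simp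
        linarith [e ▸ hs]
      -- the pointwise exponential bound
      have hPW : ∀ x1 x2 : Fin n → Bool,
          Real.exp (μ / 2 * Real.sqrt ((n : ℝ) - ∑ i, cgaStep oneMax μ f x1 x2 i))
          ≤ Real.exp (μ / 2 * Real.sqrt Dd) *
              (Real.exp (Real.sqrt 2 * C / 400 *
                  ∑ i, (if f i = 1 - 1 / (n : ℝ) ∧ x1 i ≠ x2 i then (1 : ℝ) else 0)) *
                Real.exp (-(1 / 22) * (if (x1, x2) ∈ Es then (1 : ℝ) else 0))) := by
        intro x1 x2
        rw [← Real.exp_add, ← Real.exp_add]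
        apply Real.exp_le_exp.mpr
        have hT0 : (0 : ℝ) ≤ ∑ i, (if f i = 1 - 1 / (n : ℝ) ∧ x1 i ≠ x2 i
            then (1 : ℝ) else 0) :=
          Finset.sum_nonneg (fun i _ => by split_ifs <;> norm_num)
        -- the winner-loser gap
        have hgp0 : (0 : ℝ) ≤ (numOnes (ySel (oneMax (n := n)) x1 x2).1 : ℝ)
            - (numOnes (ySel (oneMax (n := n)) x1 x2).2 : ℝ) := by
          unfold ySel
          split_ifs with h
          · simp only [oneMax] at h
            simp only []
            linarith [h]
          · have h' := le_of_not_ge h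
            simp only [oneMax] at h'
            simp only []
            linarith [h']
        have habs : |(numOnes x1 : ℝ) - (numOnes x2 : ℝ)|
            = (numOnes (ySel (oneMax (n := n)) x1 x2).1 : ℝ)
              - (numOnes (ySel (oneMax (n := n)) x1 x2).2 : ℝ) := by
          unfold ySel
          split_ifs with h
          · simp only [oneMax] at h
            simp only []
            exact abs_of_nonneg (by linarith [h])
          · have h' := le_of_not_ge h
            simp only [oneMax] at h'
            simp only []
            rw [abs_of_nonpos (by linarith [h'])]
            ring
        -- step inequality
        have hstep : (n : ℝ) - ∑ i, cgaStep oneMax μ f x1 x2 i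
            ≤ Dd - ((numOnes (ySel (oneMax (n := n)) x1 x2).1 : ℝ)
                - (numOnes (ySel (oneMax (n := n)) x1 x2).2 : ℝ)) / μ
              + (∑ i, (if f i = 1 - 1 / (n : ℝ) ∧ x1 i ≠ x2 i then (1 : ℝ) else 0)) / μ := by
          have hsum : ∑ i, (f i - cgaStep oneMax μ f x1 x2 i)
              ≤ ∑ i, (-(boolToR ((ySel (oneMax (n := n)) x1 x2).1 i)
                    - boolToR ((ySel (oneMax (n := n)) x1 x2).2 i)) / μ
                  + (if f i = 1 - 1 / (n : ℝ) ∧ x1 i ≠ x2 i then (1 : ℝ) else 0) / μ) := by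
            apply Finset.sum_le_sum
            intro i _
            have h2 := (hcoord x1 x2 i).2
            have hconv : (if f i = 1 - 1 / (n : ℝ) ∧
                  (ySel (oneMax (n := n)) x1 x2).1 i ≠ (ySel (oneMax (n := n)) x1 x2).2 i
                then (1 : ℝ) else 0)
                = (if f i = 1 - 1 / (n : ℝ) ∧ x1 i ≠ x2 i then (1 : ℝ) else 0) :=
              if_congr (and_congr_right (fun _ => hyne x1 x2 i)) rfl rfl
            rw [hconv] at h2
            exact h2
          have hL : ∑ i, (f i - cgaStep oneMax μ f x1 x2 i)
              = ((n : ℝ) - ∑ i, cgaStep oneMax μ f x1 x2 i) - Dd := by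
            rw [Finset.sum_sub_distrib, hDdd]; ring
          have hR : ∑ i, (-(boolToR ((ySel (oneMax (n := n)) x1 x2).1 i)
                  - boolToR ((ySel (oneMax (n := n)) x1 x2).2 i)) / μ
                + (if f i = 1 - 1 / (n : ℝ) ∧ x1 i ≠ x2 i then (1 : ℝ) else 0) / μ)
              = -((numOnes (ySel (oneMax (n := n)) x1 x2).1 : ℝ)
                  - (numOnes (ySel (oneMax (n := n)) x1 x2).2 : ℝ)) / μ
                + (∑ i, (if f i = 1 - 1 / (n : ℝ) ∧ x1 i ≠ x2 i then (1 : ℝ) else 0)) / μ := by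
            rw [Finset.sum_add_distrib, ← Finset.sum_div, ← Finset.sum_div]
            congr 2
            rw [← hbool, ← hbool, ← Finset.sum_sub_distrib, ← Finset.sum_neg_distrib]
          rw [hL, hR] at hsum
          exact (sub_le_iff_le_add.mp hsum).trans_eq (by ring)
        -- event dichotomy
        have hdich : (if (x1, x2) ∈ Es then (1 : ℝ) else 0) = 0 ∨
            ((if (x1, x2) ∈ Es then (1 : ℝ) else 0) = 1 ∧
              Real.sqrt (Dd - 1) / 5 ≤ (numOnes (ySel (oneMax (n := n)) x1 x2).1 : ℝ)
                - (numOnes (ySel (oneMax (n := n)) x1 x2).2 : ℝ)) := by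
          by_cases hmem : (x1, x2) ∈ Es
          · right
            refine ⟨if_pos hmem, ?_⟩
            have hmem' : (1 / 5) * Real.sqrt Dnat
                ≤ |(numOnes x1 : ℝ) - (numOnes x2 : ℝ)| := hmem
            have hfl1 : Dd - 1 ≤ (Dnat : ℝ) := le_of_lt (Nat.sub_one_lt_floor Dd)
            have hsq : Real.sqrt (Dd - 1) ≤ Real.sqrt Dnat := Real.sqrt_le_sqrt hfl1
            rw [habs] at hmem'
            linarith
          · exact Or.inl (if_neg hmem)
        have hdrift := drift_pointwise hC hC1 hμ hDgt (hD'1 x1 x2) hT0 hgp0 hstep hdich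
        linarith [hdrift]
      -- assembling
      calc (∑ x1 : Fin n → Bool, ∑ x2 : Fin n → Bool,
              sampleProb f x1 * sampleProb f x2 *
                prNoStop (oneMax (n := n)) μ (10000 / C ^ 2) N (cgaStep oneMax μ f x1 x2))
          ≤ ∑ x1 : Fin n → Bool, ∑ x2 : Fin n → Bool,
              sampleProb f x1 * sampleProb f x2 *
                (Real.exp (-(C / 30)) ^ N * (Real.exp (μ / 2 * Real.sqrt Dd) *
                  (Real.exp (Real.sqrt 2 * C / 400 *
                      ∑ i, (if f i = 1 - 1 / (n : ℝ) ∧ x1 i ≠ x2 i then (1 : ℝ) else 0)) *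
                    Real.exp (-(1 / 22) * (if (x1, x2) ∈ Es then (1 : ℝ) else 0))))) := by
            apply Finset.sum_le_sum
            intro x1 _
            apply Finset.sum_le_sum
            intro x2 _
            apply mul_le_mul_of_nonneg_left _ (mul_nonneg (hw x1) (hw x2))
            calc prNoStop (oneMax (n := n)) μ (10000 / C ^ 2) N (cgaStep oneMax μ f x1 x2)
                ≤ Real.exp (-(C / 30)) ^ N *
                    Real.exp (μ / 2 * Real.sqrt ((n : ℝ) - ∑ i, cgaStep oneMax μ f x1 x2 i)) :=
                  ih (cgaStep oneMax μ f x1 x2) (fun i => (hcoord x1 x2 i).1)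
              _ ≤ Real.exp (-(C / 30)) ^ N * (Real.exp (μ / 2 * Real.sqrt Dd) *
                    (Real.exp (Real.sqrt 2 * C / 400 *
                        ∑ i, (if f i = 1 - 1 / (n : ℝ) ∧ x1 i ≠ x2 i then (1 : ℝ) else 0)) *
                      Real.exp (-(1 / 22) * (if (x1, x2) ∈ Es then (1 : ℝ) else 0)))) :=
                  mul_le_mul_of_nonneg_left (hPW x1 x2) (by positivity)
        _ = Real.exp (-(C / 30)) ^ N * Real.exp (μ / 2 * Real.sqrt Dd) *
              (∑ x1 : Fin n → Bool, ∑ x2 : Fin n → Bool,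
                sampleProb f x1 * sampleProb f x2 *
                  (Real.exp (Real.sqrt 2 * C / 400 *
                      ∑ i, (if f i = 1 - 1 / (n : ℝ) ∧ x1 i ≠ x2 i then (1 : ℝ) else 0)) *
                    Real.exp (-(1 / 22) * (if (x1, x2) ∈ Es then (1 : ℝ) else 0)))) := by
            rw [Finset.mul_sum]
            apply Finset.sum_congr rfl
            intro x1 _
            rw [Finset.mul_sum]
            apply Finset.sum_congr rfl
            intro x2 _
            ring
        _ ≤ Real.exp (-(C / 30)) ^ N * Real.exp (μ / 2 * Real.sqrt Dd) *
              Real.exp (-(C / 30)) := by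
            apply mul_le_mul_of_nonneg_left
              (step_expectation hn hC hC1 f hf0 hf1 Es hP) (by positivity)
        _ = Real.exp (-(C / 30)) ^ (N + 1) * Real.exp (μ / 2 * Real.sqrt Dd) := by
            ring

end CgaAux5

/-- Under the Droste-type anti-concentration property with constant `C`, there are
constants `K, c > 0` such that for all `n ≥ 2` and all well-behaved `μ ≥ log₂ n`,
the first time `T` at which the cGA on OneMax has `D_t ≤ K` or some frequency below
`1/3` satisfies `Pr[T ≥ (10(2+√2)/C)·μ·√n] ≤ c·exp(-μ/c)`. -/
theorem cga_onemax_progress (C : ℝ) (hC : 0 < C)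
    (hdroste : ∀ (m D : ℕ) (g : Fin m → ℝ), (∀ i, 1 / 3 ≤ g i ∧ g i ≤ 1) →
      (∑ i, g i) ≤ (m : ℝ) - (D : ℝ) →
      C ≤ prPair g {p | (1 / 5) * Real.sqrt D ≤
            |(numOnes p.1 : ℝ) - (numOnes p.2 : ℝ)|}) :
    ∃ K c : ℝ, 0 < K ∧ 0 < c ∧
      ∀ n : ℕ, 2 ≤ n → ∀ μ : ℝ, Real.logb 2 n ≤ μ → wellBehaved n μ →
        prNoStop (oneMax (n := n)) μ K
            ⌈(10 * (2 + Real.sqrt 2) / C) * μ * Real.sqrt n⌉₊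
            (fun _ : Fin n => 1 / 2) ≤
          c * Real.exp (-(μ / c)) := by
  classical
  have hC1 : C ≤ 1 := by
    have h := hdroste 0 0 (fun _ => 1) (fun i => i.elim0) (by simp)
    refine h.trans (le_of_eq ?_)
    haveI : Unique ((Fin 0 → Bool) × (Fin 0 → Bool)) :=
      { default := (fun i => i.elim0, fun i => i.elim0),
        uniq := fun p => by
          apply Prod.ext <;> funext i <;> exact i.elim0 }
    unfold prPair
    rw [Fintype.sum_unique]
    rw [Set.indicator_apply, if_pos (by simp [Set.mem_setOf_eq, numOnes])]
    unfold sampleProb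
    simp
  refine ⟨10000 / C ^ 2, 1, by positivity, one_pos, ?_⟩
  intro n hn μ hμ hwb
  obtain ⟨m, hm⟩ := hwb
  have h2n : (2 : ℝ) ≤ (n : ℝ) := by exact_mod_cast hn
  have hn0 : (0 : ℝ) < n := by linarith
  have hμ1 : 1 ≤ μ := by
    have h1 : Real.logb 2 2 ≤ Real.logb 2 n :=
      Real.logb_le_logb_of_le (by norm_num) (by norm_num) h2n
    rw [Real.logb_self_eq_one (by norm_num)] at h1
    linarith
  have hμ0 : (0 : ℝ) < μ := by linarith
  have hgrid : ∀ i : Fin n, ∃ k : ℕ, k ≤ 2 * m ∧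
      (fun _ : Fin n => (1 : ℝ) / 2) i = 1 / n + (k : ℝ) / μ := by
    intro i
    refine ⟨m, by omega, ?_⟩
    show (1 : ℝ) / 2 = 1 / n + (m : ℝ) / μ
    have hmμ : (m : ℝ) / μ = (1 - 2 / n) / 2 := by
      rw [div_eq_iff hμ0.ne']
      linarith [hm]
    rw [hmμ]
    ring
  have hkey := cga_key hC hC1 hdroste hn hμ1 m hm
      ⌈(10 * (2 + Real.sqrt 2) / C) * μ * Real.sqrt n⌉₊ (fun _ : Fin n => 1 / 2) hgrid
  refine hkey.trans ?_
  have hsum : (∑ _i : Fin n, ((1 : ℝ) / 2)) = (n : ℝ) / 2 := by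
    rw [Finset.sum_const, Finset.card_univ, Fintype.card_fin, nsmul_eq_mul]
    ring
  rw [hsum]
  have hNge : (10 * (2 + Real.sqrt 2) / C) * μ * Real.sqrt n
      ≤ ((⌈(10 * (2 + Real.sqrt 2) / C) * μ * Real.sqrt n⌉₊ : ℕ) : ℝ) := Nat.le_ceil _
  have hs2 := sqrt2_ge_one
  have hs2' := sqrt2_le
  have hs2'' := sqrt2_ge
  have hsn : Real.sqrt 2 ≤ Real.sqrt n := Real.sqrt_le_sqrt h2n
  have hsn0 : (0 : ℝ) < Real.sqrt n := by linarith
  have hs2pos : (0 : ℝ) < Real.sqrt 2 := by linarith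
  have hdivn : Real.sqrt ((n : ℝ) - (n : ℝ) / 2) = Real.sqrt n / Real.sqrt 2 := by
    rw [show (n : ℝ) - (n : ℝ) / 2 = (n : ℝ) / 2 by ring, Real.sqrt_div (by linarith) 2]
  rw [hdivn]
  rw [← Real.exp_nat_mul, ← Real.exp_add, one_mul, div_one]
  apply Real.exp_le_exp.mpr
  have hss : Real.sqrt 2 * Real.sqrt 2 = 2 := Real.mul_self_sqrt (by norm_num)
  have e3 : Real.sqrt n / Real.sqrt 2 = Real.sqrt n * Real.sqrt 2 / 2 := by
    rw [div_eq_div_iff hs2pos.ne' (by norm_num : (2:ℝ) ≠ 0)]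
    linear_combination (- Real.sqrt n) * hss
  rw [e3]
  have hNC : (2 + Real.sqrt 2) / 3 * (μ * Real.sqrt n)
      ≤ ((⌈(10 * (2 + Real.sqrt 2) / C) * μ * Real.sqrt n⌉₊ : ℕ) : ℝ) * (C / 30) := by
    have h := mul_le_mul_of_nonneg_right hNge (le_of_lt (by positivity : (0 : ℝ) < C / 30))
    have e : (10 * (2 + Real.sqrt 2) / C) * μ * Real.sqrt n * (C / 30)
        = (2 + Real.sqrt 2) / 3 * (μ * Real.sqrt n) := by
      field_simp
      ring
    linarith [e ▸ h]
  have h1 : (12 : ℝ) ≤ Real.sqrt n * (8 + Real.sqrt 2) := by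
    have := mul_le_mul (le_trans hs2'' hsn) (show (47 : ℝ) / 5 ≤ 8 + Real.sqrt 2 by linarith)
      (by norm_num) (by linarith)
    nlinarith [this]
  have key : 12 * μ ≤ μ * (Real.sqrt n * (8 + Real.sqrt 2)) := by
    have := mul_le_mul_of_nonneg_left h1 hμ0.le
    linarith
  linarith [hNC, key]
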